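/- arXiv:2504.09093 — 3 statements merged into one kernel-verified Lean document; each statement's English description precedes it below -/
import Mathlib

section
/- Let λ₁, λ₂ be finite complex Borel measures on ℝ and let a₁, a₂, c₁, c₂ ∈ ℂ. If c₁ + a₁·w + ∫_ℝ (1+s·w)/(s−w) dλ₁(s) = c₂ + a₂·w + ∫_ℝ (1+s·w)/(s−w) dλ₂(s) for every w ∈ ℂ∖ℝ, then λ₁ = λ₂, a₁ = a₂ and c₁ = c₂. -/
/-!
Splitting the kernel as `(1 + s w) / (s - w) = w + (1 + w²) / (s - w)` and evaluating at
`w = ±i`, where `1 + w² = 0`, separates `c` from `a + λ(ℝ)`; away from `±i` it follows that the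
Cauchy transforms `∫ dλ(s) / (s - w)` agree. Their jump across `ℝ` is the Poisson integral, and
Stieltjes inversion (integrating the Poisson kernel in `x`, which produces arctangents) recovers
`λ` on open intervals, hence on all Borel sets; the total mass then gives `a`.
-/

open MeasureTheory Filter Topology Set Real

lemma ofReal_sub_ne_zero_of_im_ne_zero {w : ℂ} (hw : w.im ≠ 0) (s : ℝ) : (s : ℂ) - w ≠ 0 := by
  intro h
  apply hw
  simpa using congrArg Complex.im h

lemma one_add_mul_div_sub_eq {w : ℂ} (hw : w.im ≠ 0) (s : ℝ) :
    (1 + (s : ℂ) * w) / ((s : ℂ) - w) = w + (1 + w ^ 2) * ((s : ℂ) - w)⁻¹ := by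
  have := ofReal_sub_ne_zero_of_im_ne_zero hw s
  field_simp
  ring

lemma norm_inv_ofReal_sub_le {w : ℂ} (hw : w.im ≠ 0) (s : ℝ) :
    ‖((s : ℂ) - w)⁻¹‖ ≤ |w.im|⁻¹ := by
  rw [norm_inv]
  refine inv_anti₀ (abs_pos.mpr hw) ?_
  simpa using Complex.abs_im_le_norm ((s : ℂ) - w)

lemma one_add_sq_ne_zero_of_abs_im_lt_one {w : ℂ} (hw : |w.im| < 1) : 1 + w ^ 2 ≠ 0 := by
  intro h
  have hre := congrArg Complex.re h
  simp only [Complex.add_re, Complex.one_re, sq, Complex.mul_re, Complex.zero_re] at hre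
  nlinarith [abs_lt.mp hw, mul_self_nonneg w.re]

lemma inv_ofReal_sub_sub_inv_ofReal_sub (x s : ℝ) {y : ℝ} (hy : y ≠ 0) :
    ((s : ℂ) - (x + y * Complex.I))⁻¹ - ((s : ℂ) - (x - y * Complex.I))⁻¹
      = 2 * y * Complex.I * (((s - x) ^ 2 + y ^ 2)⁻¹ : ℝ) := by
  have h₁ : (s : ℂ) - (x + y * Complex.I) ≠ 0 :=
    ofReal_sub_ne_zero_of_im_ne_zero (by simpa using hy) s
  have h₂ : (s : ℂ) - (x - y * Complex.I) ≠ 0 :=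
    ofReal_sub_ne_zero_of_im_ne_zero (by simpa using hy) s
  have hprod : ((s : ℂ) - (x + y * Complex.I)) * ((s : ℂ) - (x - y * Complex.I))
      = (((s - x) ^ 2 + y ^ 2 : ℝ) : ℂ) := by
    push_cast
    linear_combination (-(y : ℂ) ^ 2) * Complex.I_sq
  rw [inv_sub_inv h₁ h₂, hprod, Complex.ofReal_inv, div_eq_mul_inv]
  ring

lemma integral_inv_sub_sq_add_sq (a b s : ℝ) {y : ℝ} (hy : 0 < y) :
    ∫ x in a..b, ((x - s) ^ 2 + y ^ 2)⁻¹ = (arctan ((b - s) / y) - arctan ((a - s) / y)) / y := by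
  have hderiv (x : ℝ) :
      HasDerivAt (fun x => arctan ((x - s) / y) / y) ((x - s) ^ 2 + y ^ 2)⁻¹ x := by
    have h := (((hasDerivAt_id' x).sub_const s).div_const y).arctan.div_const y
    refine h.congr_deriv ?_
    field_simp
    ring
  have hcont : Continuous fun x : ℝ => ((x - s) ^ 2 + y ^ 2)⁻¹ :=
    (by fun_prop : Continuous fun x : ℝ => (x - s) ^ 2 + y ^ 2).inv₀ fun x => by positivity
  rw [intervalIntegral.integral_eq_sub_of_hasDerivAt (fun x _ => hderiv x)
    (hcont.intervalIntegrable a b)]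
  ring

lemma tendsto_arctan_mul_sq_sub (c : ℝ) :
    Tendsto (fun t : ℝ => arctan (c * t ^ 2 - t)) atTop
      (𝓝 (if 0 < c then π / 2 else -(π / 2))) := by
  split_ifs with hc
  · have h : Tendsto (fun t : ℝ => t * (c * t - 1)) atTop atTop :=
      tendsto_id.atTop_mul_atTop₀ (tendsto_atTop_add_const_right _ (-1)
        (tendsto_id.const_mul_atTop hc))
    refine (tendsto_arctan_atTop.mono_right nhdsWithin_le_nhds).comp (h.congr fun t => ?_)
    ring
  · have h : Tendsto (fun t : ℝ => c * t ^ 2 - t) atTop atBot :=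
      tendsto_atBot_mono (fun t => by nlinarith [sq_nonneg t]) tendsto_neg_atTop_atBot
    exact (tendsto_arctan_atBot.mono_right nhdsWithin_le_nhds).comp h

lemma tendsto_arctan_add_arctan_indicator_Ioo {α β : ℝ} (hαβ : α < β) (s : ℝ) :
    Tendsto (fun t : ℝ => arctan ((β - s) * t ^ 2 - t) + arctan ((s - α) * t ^ 2 - t)) atTop
      (𝓝 ((Ioo α β).indicator (fun _ => π) s)) := by
  convert (tendsto_arctan_mul_sq_sub _).add (tendsto_arctan_mul_sq_sub _) using 2
  by_cases hs : s ∈ Ioo α β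
  · rw [indicator_of_mem hs, if_pos (sub_pos.mpr hs.2), if_pos (sub_pos.mpr hs.1)]
    ring
  · rw [indicator_of_notMem hs]
    rw [mem_Ioo, not_and_or, not_lt, not_lt] at hs
    rcases hs with hs | hs
    · rw [if_pos (by linarith), if_neg (by linarith)]; ring
    · rw [if_neg (by linarith), if_pos (by linarith)]; ring

section Transforms

variable {μ : Measure ℝ} {g : ℝ → ℂ}

lemma integrable_inv_ofReal_sub_mul (hg : Integrable g μ) {w : ℂ} (hw : w.im ≠ 0) :
    Integrable (fun s : ℝ => ((s : ℂ) - w)⁻¹ * g s) μ :=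
  have hcont : Continuous fun s : ℝ => ((s : ℂ) - w)⁻¹ :=
    (Complex.continuous_ofReal.sub continuous_const).inv₀ (ofReal_sub_ne_zero_of_im_ne_zero hw)
  hg.bdd_mul hcont.aestronglyMeasurable (.of_forall (norm_inv_ofReal_sub_le hw))

lemma integral_one_add_mul_div_sub_mul (hg : Integrable g μ) {w : ℂ} (hw : w.im ≠ 0) :
    ∫ s, (1 + (s : ℂ) * w) / ((s : ℂ) - w) * g s ∂μ
      = w * ∫ s, g s ∂μ + (1 + w ^ 2) * ∫ s, ((s : ℂ) - w)⁻¹ * g s ∂μ := by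
  simp_rw [one_add_mul_div_sub_eq hw, add_mul w, mul_assoc]
  rw [integral_add (hg.const_mul w) ((integrable_inv_ofReal_sub_mul hg hw).const_mul _),
    integral_const_mul, integral_const_mul]

lemma integral_inv_sub_sub_integral_inv_sub (hg : Integrable g μ) (x : ℝ) {y : ℝ} (hy : y ≠ 0) :
    ∫ s, ((s : ℂ) - (x + y * Complex.I))⁻¹ * g s ∂μ
        - ∫ s, ((s : ℂ) - (x - y * Complex.I))⁻¹ * g s ∂μ
      = 2 * y * Complex.I * ∫ s, (((s - x) ^ 2 + y ^ 2)⁻¹ : ℝ) * g s ∂μ := by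
  rw [← integral_sub (integrable_inv_ofReal_sub_mul hg (by simpa using hy))
    (integrable_inv_ofReal_sub_mul hg (by simpa using hy)), ← integral_const_mul]
  refine integral_congr_ae (.of_forall fun s => ?_)
  simp only [← sub_mul, inv_ofReal_sub_sub_inv_ofReal_sub x s hy]
  ring

lemma mul_intervalIntegral_poisson_eq [SFinite μ] (hg : Integrable g μ) {a b y : ℝ} (hab : a ≤ b)
    (hy : 0 < y) :
    (y : ℂ) * ∫ x in a..b, ∫ s, (((s - x) ^ 2 + y ^ 2)⁻¹ : ℝ) * g s ∂μ
      = ∫ s, ((arctan ((b - s) / y) - arctan ((a - s) / y) : ℝ) : ℂ) * g s ∂μ := by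
  have hcont : Continuous fun p : ℝ × ℝ => ((((p.2 - p.1) ^ 2 + y ^ 2)⁻¹ : ℝ) : ℂ) :=
    Complex.continuous_ofReal.comp <|
      (by fun_prop : Continuous fun p : ℝ × ℝ => (p.2 - p.1) ^ 2 + y ^ 2).inv₀
        fun p => by positivity
  have hint : Integrable (Function.uncurry fun x s => ((((s - x) ^ 2 + y ^ 2)⁻¹ : ℝ) : ℂ) * g s)
      ((volume.restrict (Ioc a b)).prod μ) := by
    refine ((integrable_const (y ^ 2)⁻¹).mul_prod hg.norm).mono'
      (hcont.aestronglyMeasurable.mul hg.aestronglyMeasurable.comp_snd) (.of_forall fun p => ?_)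
    rw [Function.uncurry_apply_pair, norm_mul, Complex.norm_real, norm_inv, Real.norm_eq_abs,
      abs_of_pos (by positivity)]
    gcongr
    nlinarith [sq_nonneg (p.2 - p.1)]
  rw [intervalIntegral.integral_of_le hab, integral_integral_swap hint, ← integral_const_mul]
  refine integral_congr_ae (.of_forall fun s => ?_)
  dsimp only
  rw [integral_mul_const, integral_complex_ofReal, ← intervalIntegral.integral_of_le hab,
    ← mul_assoc]
  simp_rw [← neg_sub _ s, neg_sq]
  have hy' : (y : ℂ) ≠ 0 := Complex.ofReal_ne_zero.mpr hy.ne'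
  rw [integral_inv_sub_sq_add_sq a b s hy, Complex.ofReal_div]
  field_simp

/- Shrinking the interval to `[α + 1/t, β - 1/t]` while the height is `1/t²` turns the arctangent
arguments into `(β - s) t² - t` and `(s - α) t² - t`, which diverge with the sign of `β - s`, resp.
`s - α`, even at the endpoints: the limit is exactly `π` times the indicator of `Ioo α β`. -/
lemma integral_arctan_add_arctan_mul_eq [SFinite μ] (hg : Integrable g μ) {α β t : ℝ}
    (ht : 0 < t) (hαβ : α + t⁻¹ ≤ β - t⁻¹) :
    ∫ s, ((arctan ((β - s) * t ^ 2 - t) + arctan ((s - α) * t ^ 2 - t) : ℝ) : ℂ) * g s ∂μ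
      = ((t⁻¹ ^ 2 : ℝ) : ℂ) * ∫ x in (α + t⁻¹)..(β - t⁻¹),
          ∫ s, (((s - x) ^ 2 + (t⁻¹ ^ 2) ^ 2)⁻¹ : ℝ) * g s ∂μ := by
  rw [mul_intervalIntegral_poisson_eq hg hαβ (by positivity)]
  refine integral_congr_ae (.of_forall fun s => ?_)
  dsimp only
  rw [sub_eq_add_neg (arctan _), ← arctan_neg]
  congr 4 <;> field_simp <;> ring

lemma tendsto_integral_arctan_add_arctan_mul (hg : Integrable g μ) {α β : ℝ} (hαβ : α < β) :
    Tendsto (fun t : ℝ =>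
        ∫ s, ((arctan ((β - s) * t ^ 2 - t) + arctan ((s - α) * t ^ 2 - t) : ℝ) : ℂ) * g s ∂μ)
      atTop (𝓝 (π * ∫ s in Ioo α β, g s ∂μ)) := by
  have hlim : ∫ s, (((Ioo α β).indicator (fun _ => π) s : ℝ) : ℂ) * g s ∂μ
      = π * ∫ s in Ioo α β, g s ∂μ := by
    rw [← integral_const_mul, ← integral_indicator measurableSet_Ioo]
    refine integral_congr_ae (.of_forall fun s => ?_)
    by_cases hs : s ∈ Ioo α β <;> simp [hs]
  rw [← hlim]
  refine tendsto_integral_filter_of_dominated_convergence (fun s => π * ‖g s‖)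
    (.of_forall fun t => ?_) (.of_forall fun t => .of_forall fun s => ?_) (hg.norm.const_mul π)
    (.of_forall fun s => ?_)
  · exact (Complex.continuous_ofReal.comp (by fun_prop)).aestronglyMeasurable.mul hg.1
  · rw [norm_mul, Complex.norm_real, Real.norm_eq_abs]
    gcongr
    refine (abs_add_le _ _).trans ?_
    have habs (x : ℝ) : |arctan x| ≤ π / 2 :=
      abs_le.mpr ⟨(neg_pi_div_two_lt_arctan x).le, (arctan_lt_pi_div_two x).le⟩
    linarith [habs ((β - s) * t ^ 2 - t), habs ((s - α) * t ^ 2 - t)]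
  · exact ((Complex.continuous_ofReal.tendsto _).comp
      (tendsto_arctan_add_arctan_indicator_Ioo hαβ s)).mul_const _

end Transforms

section Uniqueness

variable {μ₁ μ₂ : Measure ℝ} {g₁ g₂ : ℝ → ℂ}

lemma setIntegral_Ioo_eq_of_poisson_eq [SFinite μ₁] [SFinite μ₂] (hg₁ : Integrable g₁ μ₁)
    (hg₂ : Integrable g₂ μ₂)
    (h : ∀ x y : ℝ, 0 < y → y < 1 → ∫ s, (((s - x) ^ 2 + y ^ 2)⁻¹ : ℝ) * g₁ s ∂μ₁
      = ∫ s, (((s - x) ^ 2 + y ^ 2)⁻¹ : ℝ) * g₂ s ∂μ₂) (α β : ℝ) :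
    ∫ s in Ioo α β, g₁ s ∂μ₁ = ∫ s in Ioo α β, g₂ s ∂μ₂ := by
  rcases le_or_gt β α with hβα | hαβ
  · simp [Ioo_eq_empty_of_le hβα]
  have hsmall : ∀ᶠ t : ℝ in atTop, t⁻¹ < min 1 ((β - α) / 2) :=
    tendsto_inv_atTop_zero.eventually (gt_mem_nhds (lt_min one_pos (by linarith)))
  have heq : ∀ᶠ t : ℝ in atTop,
      ∫ s, ((arctan ((β - s) * t ^ 2 - t) + arctan ((s - α) * t ^ 2 - t) : ℝ) : ℂ) * g₁ s ∂μ₁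
        = ∫ s, ((arctan ((β - s) * t ^ 2 - t) + arctan ((s - α) * t ^ 2 - t) : ℝ) : ℂ)
            * g₂ s ∂μ₂ := by
    filter_upwards [eventually_gt_atTop 0, hsmall] with t ht hsmall
    rw [lt_min_iff] at hsmall
    have hab : α + t⁻¹ ≤ β - t⁻¹ := by linarith
    have hy : t⁻¹ ^ 2 < 1 := pow_lt_one₀ (by positivity) hsmall.1 two_ne_zero
    rw [integral_arctan_add_arctan_mul_eq hg₁ ht hab, integral_arctan_add_arctan_mul_eq hg₂ ht hab]
    congr 1
    exact intervalIntegral.integral_congr fun x _ => h x _ (by positivity) hy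
  exact mul_left_cancel₀ (Complex.ofReal_ne_zero.mpr pi_ne_zero) <| tendsto_nhds_unique
    ((tendsto_integral_arctan_add_arctan_mul hg₁ hαβ).congr' heq)
    (tendsto_integral_arctan_add_arctan_mul hg₂ hαβ)

lemma integral_eq_of_setIntegral_Ioo_eq (hg₁ : Integrable g₁ μ₁) (hg₂ : Integrable g₂ μ₂)
    (h : ∀ α β : ℝ, ∫ s in Ioo α β, g₁ s ∂μ₁ = ∫ s in Ioo α β, g₂ s ∂μ₂) :
    ∫ s, g₁ s ∂μ₁ = ∫ s, g₂ s ∂μ₂ := by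
  have hmono : Monotone fun t : ℝ => Ioo (-t) t := fun _ _ h => Ioo_subset_Ioo (neg_le_neg h) h
  have hunion : ⋃ t : ℝ, Ioo (-t) t = univ := iUnion_eq_univ_iff.mpr fun x =>
    ⟨|x| + 1, by constructor <;> linarith [neg_abs_le x, le_abs_self x]⟩
  have hlim {μ : Measure ℝ} {g : ℝ → ℂ} (hg : Integrable g μ) :
      Tendsto (fun t : ℝ => ∫ s in Ioo (-t) t, g s ∂μ) atTop (𝓝 (∫ s, g s ∂μ)) := by
    simpa [hunion] using
      tendsto_setIntegral_of_monotone (fun _ => measurableSet_Ioo) hmono hg.integrableOn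
  exact tendsto_nhds_unique ((hlim hg₁).congr fun t => h _ _) (hlim hg₂)

lemma withDensityᵥ_eq_of_setIntegral_Ioo_eq (hg₁ : Integrable g₁ μ₁) (hg₂ : Integrable g₂ μ₂)
    (h : ∀ α β : ℝ, ∫ s in Ioo α β, g₁ s ∂μ₁ = ∫ s in Ioo α β, g₂ s ∂μ₂) :
    μ₁.withDensityᵥ g₁ = μ₂.withDensityᵥ g₂ := by
  refine VectorMeasure.ext_of_generateFrom _ (fun t ht => ?_)
    (BorelSpace.measurable_eq.trans borel_eq_generateFrom_Ioo_rat) isPiSystem_Ioo_rat ?_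
  · simp only [mem_iUnion, mem_singleton_iff] at ht
    obtain ⟨a, b, -, rfl⟩ := ht
    rw [withDensityᵥ_apply hg₁ measurableSet_Ioo, withDensityᵥ_apply hg₂ measurableSet_Ioo]
    exact h _ _
  · rw [withDensityᵥ_apply hg₁ .univ, withDensityᵥ_apply hg₂ .univ, setIntegral_univ,
      setIntegral_univ]
    exact integral_eq_of_setIntegral_Ioo_eq hg₁ hg₂ h

variable {a₁ a₂ c₁ c₂ : ℂ}

lemma eq_and_add_integral_eq_of_eqOn_nonreal (hg₁ : Integrable g₁ μ₁) (hg₂ : Integrable g₂ μ₂)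
    (h : ∀ w : ℂ, w.im ≠ 0 →
      c₁ + a₁ * w + ∫ s, (1 + (s : ℂ) * w) / ((s : ℂ) - w) * g₁ s ∂μ₁
        = c₂ + a₂ * w + ∫ s, (1 + (s : ℂ) * w) / ((s : ℂ) - w) * g₂ s ∂μ₂) :
    c₁ = c₂ ∧ a₁ + ∫ s, g₁ s ∂μ₁ = a₂ + ∫ s, g₂ s ∂μ₂ := by
  have hI := h Complex.I (by simp)
  have hnI := h (-Complex.I) (by simp)
  rw [integral_one_add_mul_div_sub_mul hg₁ (by simp),
    integral_one_add_mul_div_sub_mul hg₂ (by simp)] at hI hnI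
  simp only [Complex.I_sq, neg_sq, add_neg_cancel, zero_mul, add_zero] at hI hnI
  exact ⟨by linear_combination (hI + hnI) / 2,
    mul_left_cancel₀ (by simp : 2 * Complex.I ≠ 0) (by linear_combination hI - hnI)⟩

lemma integral_inv_sub_eq_of_eqOn_nonreal (hg₁ : Integrable g₁ μ₁) (hg₂ : Integrable g₂ μ₂)
    (h : ∀ w : ℂ, w.im ≠ 0 →
      c₁ + a₁ * w + ∫ s, (1 + (s : ℂ) * w) / ((s : ℂ) - w) * g₁ s ∂μ₁
        = c₂ + a₂ * w + ∫ s, (1 + (s : ℂ) * w) / ((s : ℂ) - w) * g₂ s ∂μ₂)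
    (hc : c₁ = c₂) (haT : a₁ + ∫ s, g₁ s ∂μ₁ = a₂ + ∫ s, g₂ s ∂μ₂)
    {w : ℂ} (hw : w.im ≠ 0) (hw₁ : |w.im| < 1) :
    ∫ s, ((s : ℂ) - w)⁻¹ * g₁ s ∂μ₁ = ∫ s, ((s : ℂ) - w)⁻¹ * g₂ s ∂μ₂ := by
  have hw' := h w hw
  rw [integral_one_add_mul_div_sub_mul hg₁ hw, integral_one_add_mul_div_sub_mul hg₂ hw] at hw'
  exact mul_left_cancel₀ (one_add_sq_ne_zero_of_abs_im_lt_one hw₁)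
    (by linear_combination hw' - w * haT - hc)

lemma poisson_eq_of_integral_inv_sub_eq (hg₁ : Integrable g₁ μ₁) (hg₂ : Integrable g₂ μ₂)
    (h : ∀ w : ℂ, w.im ≠ 0 → |w.im| < 1 →
      ∫ s, ((s : ℂ) - w)⁻¹ * g₁ s ∂μ₁ = ∫ s, ((s : ℂ) - w)⁻¹ * g₂ s ∂μ₂)
    (x y : ℝ) (hy : 0 < y) (hy₁ : y < 1) :
    ∫ s, (((s - x) ^ 2 + y ^ 2)⁻¹ : ℝ) * g₁ s ∂μ₁
      = ∫ s, (((s - x) ^ 2 + y ^ 2)⁻¹ : ℝ) * g₂ s ∂μ₂ := by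
  refine mul_left_cancel₀ (by simp [hy.ne'] : 2 * (y : ℂ) * Complex.I ≠ 0) ?_
  have habs : |y| < 1 := by rwa [abs_of_pos hy]
  rw [← integral_inv_sub_sub_integral_inv_sub hg₁ x hy.ne',
    ← integral_inv_sub_sub_integral_inv_sub hg₂ x hy.ne',
    h _ (by simp [hy.ne']) (by simpa using habs), h _ (by simp [hy.ne']) (by simpa using habs)]

end Uniqueness

/-- A finite complex Borel measure on `ℝ` is encoded as a finite measure `μ` with an integrable
density `g`. -/
theorem stmt0
    (μ₁ μ₂ : Measure ℝ) [IsFiniteMeasure μ₁] [IsFiniteMeasure μ₂]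
    (g₁ g₂ : ℝ → ℂ) (hg₁ : Integrable g₁ μ₁) (hg₂ : Integrable g₂ μ₂)
    (a₁ a₂ c₁ c₂ : ℂ)
    (h : ∀ w : ℂ, w.im ≠ 0 →
      c₁ + a₁ * w + ∫ s, ((1 + (s : ℂ) * w) / ((s : ℂ) - w)) * g₁ s ∂μ₁
        = c₂ + a₂ * w + ∫ s, ((1 + (s : ℂ) * w) / ((s : ℂ) - w)) * g₂ s ∂μ₂) :
    (∀ E : Set ℝ, MeasurableSet E → ∫ s in E, g₁ s ∂μ₁ = ∫ s in E, g₂ s ∂μ₂)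
      ∧ a₁ = a₂ ∧ c₁ = c₂ := by
  obtain ⟨hc, haT⟩ := eq_and_add_integral_eq_of_eqOn_nonreal hg₁ hg₂ h
  have hν : μ₁.withDensityᵥ g₁ = μ₂.withDensityᵥ g₂ :=
    withDensityᵥ_eq_of_setIntegral_Ioo_eq hg₁ hg₂ <| setIntegral_Ioo_eq_of_poisson_eq hg₁ hg₂ <|
      poisson_eq_of_integral_inv_sub_eq hg₁ hg₂ fun _ hw hw₁ =>
        integral_inv_sub_eq_of_eqOn_nonreal hg₁ hg₂ h hc haT hw hw₁
  have hsets (E : Set ℝ) (hE : MeasurableSet E) : ∫ s in E, g₁ s ∂μ₁ = ∫ s in E, g₂ s ∂μ₂ := by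
    rw [← withDensityᵥ_apply hg₁ hE, ← withDensityᵥ_apply hg₂ hE, hν]
  have hmass := hsets univ .univ
  rw [setIntegral_univ, setIntegral_univ] at hmass
  exact ⟨hsets, by linear_combination haT - hmass, hc⟩
end

section
/- Let φ be holomorphic on the upper half plane ℂ₊ = {z ∈ ℂ : Im z > 0} with Im φ(z) > 0 for all z ∈ ℂ₊. Then for every z ∈ ℂ₊, |φ(z)| ≤ ((1+√2)/2) · ((1+|z|²)/Im z) · |φ(i)|. -/
open Complex ComplexConjugate Metric Set

/-!
With `a = φ(i)`, conjugating `φ` by the Möbius maps of the upper half plane onto the unit disk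
that send `i` and `a` to `0` and applying the Schwarz lemma gives the Schwarz–Pick bound
`|φ(z) - a| / |φ(z) - ā| ≤ ρ := |z - i| / |z + i|`. The triangle inequality turns it into
`|φ(z)| ≤ (1 + ρ) / (1 - ρ) · |a|`. With `P = |z + i|`, `M = |z - i|` one has
`(1 + ρ) / (1 - ρ) = (P + M)² / (P² - M²)`, where `P² - M² = 4 Im z` and
`(P + M)² ≤ 2 (P² + M²) = 4 (1 + |z|²)`. This is the estimate with constant `1 ≤ (1 + √2) / 2`.
-/

namespace Complex

lemma norm_sub_lt_norm_sub_conj {a w : ℂ} (ha : 0 < a.im) (hw : 0 < w.im) :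
    ‖w - a‖ < ‖w - conj a‖ := by
  rw [← sq_lt_sq₀ (norm_nonneg _) (norm_nonneg _), Complex.sq_norm, Complex.sq_norm]
  simp only [normSq_apply, sub_re, sub_im, conj_re, conj_im]
  nlinarith [mul_pos ha hw]

lemma sub_conj_ne_zero {a w : ℂ} (ha : 0 < a.im) (hw : 0 < w.im) : w - conj a ≠ 0 :=
  norm_pos_iff.mp ((norm_nonneg _).trans_lt (norm_sub_lt_norm_sub_conj ha hw))

end Complex

noncomputable def halfPlaneToDisk (z₀ z : ℂ) : ℂ := (z - z₀) / (z - conj z₀)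

noncomputable def diskToHalfPlane (z₀ u : ℂ) : ℂ := (z₀ - conj z₀ * u) / (1 - u)

section Cayley

variable {z₀ z u : ℂ}

lemma halfPlaneToDisk_self : halfPlaneToDisk z₀ z₀ = 0 := by
  simp [halfPlaneToDisk]

lemma norm_halfPlaneToDisk_lt_one (hz₀ : 0 < z₀.im) (hz : 0 < z.im) :
    ‖halfPlaneToDisk z₀ z‖ < 1 := by
  rw [halfPlaneToDisk, norm_div, div_lt_one (norm_pos_iff.mpr (sub_conj_ne_zero hz₀ hz))]
  exact norm_sub_lt_norm_sub_conj hz₀ hz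

lemma differentiableOn_halfPlaneToDisk (hz₀ : 0 < z₀.im) :
    DifferentiableOn ℂ (halfPlaneToDisk z₀) {z | 0 < z.im} :=
  (differentiableOn_id.sub_const _).div (differentiableOn_id.sub_const _)
    fun _ hz => sub_conj_ne_zero hz₀ hz

lemma diskToHalfPlane_zero : diskToHalfPlane z₀ 0 = z₀ := by
  simp [diskToHalfPlane]

lemma im_diskToHalfPlane :
    (diskToHalfPlane z₀ u).im = z₀.im * (1 - ‖u‖ ^ 2) / normSq (1 - u) := by
  rw [diskToHalfPlane, div_im, Complex.sq_norm]
  simp only [normSq_apply, sub_re, sub_im, mul_re, mul_im, conj_re, conj_im, one_re, one_im]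
  field_simp
  ring

lemma im_diskToHalfPlane_pos (hz₀ : 0 < z₀.im) (hu : ‖u‖ < 1) :
    0 < (diskToHalfPlane z₀ u).im := by
  rw [im_diskToHalfPlane]
  have : ‖u‖ ^ 2 < 1 := by nlinarith [norm_nonneg u]
  exact div_pos (mul_pos hz₀ (by linarith))
    (normSq_pos.mpr (isUnit_one_sub_of_norm_lt_one hu).ne_zero)

lemma differentiableOn_diskToHalfPlane :
    DifferentiableOn ℂ (diskToHalfPlane z₀) (ball 0 1) :=
  ((differentiableOn_const _).sub (differentiableOn_id.const_mul _)).div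
    ((differentiableOn_const _).sub differentiableOn_id)
    fun _ hu => (isUnit_one_sub_of_norm_lt_one (mem_ball_zero_iff.mp hu)).ne_zero

lemma diskToHalfPlane_halfPlaneToDisk (hz₀ : 0 < z₀.im) (hz : 0 < z.im) :
    diskToHalfPlane z₀ (halfPlaneToDisk z₀ z) = z := by
  have hd := sub_conj_ne_zero hz₀ hz
  have h₀ : z₀ - conj z₀ ≠ 0 := sub_conj_ne_zero hz₀ hz₀
  have h₁ : 1 - (z - z₀) / (z - conj z₀) = (z₀ - conj z₀) / (z - conj z₀) := by
    field_simp; ring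
  rw [diskToHalfPlane, halfPlaneToDisk, h₁, div_div_eq_mul_div, div_eq_iff h₀]
  field_simp
  ring

end Cayley

lemma norm_halfPlaneToDisk_map_le {f : ℂ → ℂ} (hf : DifferentiableOn ℂ f {z | 0 < z.im})
    (hmaps : MapsTo f {z | 0 < z.im} {z | 0 < z.im}) {z₀ z : ℂ} (hz₀ : 0 < z₀.im)
    (hz : 0 < z.im) :
    ‖halfPlaneToDisk (f z₀) (f z)‖ ≤ ‖halfPlaneToDisk z₀ z‖ := by
  set g : ℂ → ℂ := halfPlaneToDisk (f z₀) ∘ f ∘ diskToHalfPlane z₀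
  have hmaps_disk : MapsTo (diskToHalfPlane z₀) (ball 0 1) {z | 0 < z.im} :=
    fun _ hu => im_diskToHalfPlane_pos hz₀ (mem_ball_zero_iff.mp hu)
  have hg : DifferentiableOn ℂ g (ball 0 1) :=
    (differentiableOn_halfPlaneToDisk (hmaps hz₀)).comp
      (hf.comp differentiableOn_diskToHalfPlane hmaps_disk) (hmaps.comp hmaps_disk)
  have hg_maps : MapsTo g (ball 0 1) (closedBall 0 1) := fun u hu =>
    mem_closedBall_zero_iff.mpr
      (norm_halfPlaneToDisk_lt_one (hmaps hz₀) (hmaps (hmaps_disk hu))).le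
  have hg₀ : g 0 = 0 := by simp [g, diskToHalfPlane_zero, halfPlaneToDisk_self]
  simpa [g, diskToHalfPlane_halfPlaneToDisk hz₀ hz] using
    Complex.norm_le_norm_of_mapsTo_ball hg hg_maps hg₀ (norm_halfPlaneToDisk_lt_one hz₀ hz)

lemma norm_le_of_norm_halfPlaneToDisk_le {a w : ℂ} {r : ℝ} (ha : 0 < a.im) (hw : 0 < w.im)
    (hr : r < 1) (h : ‖halfPlaneToDisk a w‖ ≤ r) :
    ‖w‖ ≤ (1 + r) / (1 - r) * ‖a‖ := by
  have hr₀ : 0 ≤ r := (norm_nonneg _).trans h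
  have hd := norm_pos_iff.mpr (sub_conj_ne_zero ha hw)
  rw [halfPlaneToDisk, norm_div, div_le_iff₀ hd] at h
  have h₁ : ‖w‖ - ‖a‖ ≤ ‖w - a‖ := norm_sub_norm_le w a
  have h₂ : ‖w - conj a‖ ≤ ‖w‖ + ‖a‖ := (norm_sub_le _ _).trans_eq (by rw [RCLike.norm_conj])
  rw [div_mul_eq_mul_div, le_div_iff₀ (by linarith)]
  nlinarith [norm_nonneg a, norm_nonneg w]

lemma one_add_div_one_sub_norm_halfPlaneToDisk_I_le {z : ℂ} (hz : 0 < z.im) :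
    (1 + ‖halfPlaneToDisk I z‖) / (1 - ‖halfPlaneToDisk I z‖) ≤ (1 + ‖z‖ ^ 2) / z.im := by
  have hlt := norm_sub_lt_norm_sub_conj (a := I) (by simp) hz
  rw [conj_I, sub_neg_eq_add] at hlt
  set P := ‖z + I‖
  set M := ‖z - I‖
  have hP : P ^ 2 = ‖z‖ ^ 2 + 2 * z.im + 1 := by
    simp only [P, Complex.sq_norm, normSq_apply, add_re, add_im, I_re, I_im]; ring
  have hM : M ^ 2 = ‖z‖ ^ 2 - 2 * z.im + 1 := by
    simp only [M, Complex.sq_norm, normSq_apply, sub_re, sub_im, I_re, I_im]; ring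
  have hM₀ : 0 ≤ M := norm_nonneg _
  have hP₀ : 0 < P := hM₀.trans_lt hlt
  have hρ : ‖halfPlaneToDisk I z‖ = M / P := by
    rw [halfPlaneToDisk, conj_I, sub_neg_eq_add, norm_div]
  rw [hρ, show (1 + M / P) / (1 - M / P) = (P + M) / (P - M) by
    field_simp [(sub_pos.mpr hlt).ne']]
  rw [div_le_div_iff₀ (by linarith) hz]
  nlinarith [sq_nonneg (P - M)]

/-- **Vladimirov's estimate** (single-variable case, with constant `(1+√2)/2`):
if `φ` is a holomorphic self-map of the upper half plane then
`|φ(z)| ≤ ((1+√2)/2)·((1+|z|²)/Im z)·|φ(i)|` for every `z` in the upper half plane. -/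
theorem stmt2 (φ : ℂ → ℂ)
    (hφ : DifferentiableOn ℂ φ {z : ℂ | 0 < z.im})
    (hmap : ∀ z : ℂ, 0 < z.im → 0 < (φ z).im) :
    ∀ z : ℂ, 0 < z.im →
      ‖φ z‖ ≤ ((1 + Real.sqrt 2) / 2) * ((1 + ‖z‖ ^ 2) / z.im) * ‖φ Complex.I‖ := by
  intro z hz
  have hI : 0 < I.im := by simp
  have hpick : ‖halfPlaneToDisk (φ I) (φ z)‖ ≤ ‖halfPlaneToDisk I z‖ :=
    norm_halfPlaneToDisk_map_le hφ (fun w hw => hmap w hw) hI hz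
  have hconst : 1 ≤ (1 + √2) / 2 := by
    have : 1 ≤ √2 := Real.one_le_sqrt.mpr one_le_two
    linarith
  calc ‖φ z‖
      ≤ (1 + ‖halfPlaneToDisk I z‖) / (1 - ‖halfPlaneToDisk I z‖) * ‖φ I‖ :=
        norm_le_of_norm_halfPlaneToDisk_le (hmap I hI) (hmap z hz)
          (norm_halfPlaneToDisk_lt_one hI hz) hpick
    _ ≤ (1 + ‖z‖ ^ 2) / z.im * ‖φ I‖ := by
        gcongr ?_ * _; exact one_add_div_one_sub_norm_halfPlaneToDisk_I_le hz
    _ ≤ (1 + √2) / 2 * ((1 + ‖z‖ ^ 2) / z.im) * ‖φ I‖ := by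
        gcongr; exact le_mul_of_one_le_left (by positivity) hconst
end

section
/- Let φ be holomorphic on ℂ∖ℝ and suppose there exist a finite complex Borel measure λ on ℝ and a complex number λ∞ such that φ(w) = (φ(i)+φ(−i))/2 + λ∞·w + ∫_ℝ (1+s·w)/(s−w) dλ(s) for all w ∈ ℂ∖ℝ. Then sup_{z∈ℂ∖ℝ} (|Im z|/(1+|z|²))·|φ(z)| < ∞. -/
/-! The kernel obeys `|Im z| · |1 + s z| ≤ (1 + |z|²) · |s - z|` for every real `s`: by Cauchy–Schwarz
`|1 + s z|² ≤ (1 + s²)(1 + |z|²)`, and `(1 + s²) (Im z)² ≤ (1 + |z|²) |s - z|²`. Hence the weight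
`|Im z| / (1 + |z|²)` bounds the integral term by `∫ |g| dμ`, uniformly in `z`; being at most `1`
and at most `1 / |z|`, it also bounds the constant and the linear term `λ∞ z`. -/

open MeasureTheory

namespace Complex

lemma normSq_one_add_ofReal_mul_le (s : ℝ) (z : ℂ) :
    normSq (1 + s * z) ≤ (1 + s ^ 2) * (1 + normSq z) := by
  simp only [normSq_apply, add_re, add_im, one_re, one_im, mul_re, mul_im, ofReal_re, ofReal_im]
  nlinarith [sq_nonneg (s - z.re), sq_nonneg z.im]

/-- Multiplied by `1 + z.re ^ 2`, the difference of the two sides is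
`((1 + z.re ^ 2) * s - z.re * (1 + ‖z‖ ^ 2)) ^ 2 + z.im ^ 4`. -/
lemma one_add_sq_mul_im_sq_le (s : ℝ) (z : ℂ) :
    (1 + s ^ 2) * z.im ^ 2 ≤ (1 + normSq z) * normSq (s - z) := by
  simp only [normSq_apply, sub_re, sub_im, ofReal_re, ofReal_im]
  nlinarith [sq_nonneg ((1 + z.re ^ 2) * s - z.re * (1 + z.re ^ 2 + z.im ^ 2)),
    sq_nonneg (z.im ^ 2), sq_nonneg z.re, sq_nonneg z.im]

lemma abs_im_mul_norm_one_add_ofReal_mul_le (s : ℝ) (z : ℂ) :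
    |z.im| * ‖1 + s * z‖ ≤ (1 + ‖z‖ ^ 2) * ‖(s : ℂ) - z‖ := by
  refine (pow_le_pow_iff_left₀ (by positivity) (by positivity) two_ne_zero).mp ?_
  rw [mul_pow, mul_pow, sq_abs, Complex.sq_norm, Complex.sq_norm, Complex.sq_norm]
  have h₁ := normSq_one_add_ofReal_mul_le s z
  have h₂ := one_add_sq_mul_im_sq_le s z
  linarith [mul_le_mul_of_nonneg_left h₁ (sq_nonneg z.im),
    mul_le_mul_of_nonneg_left h₂ (add_nonneg zero_le_one (normSq_nonneg z))]

end Complex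

noncomputable def nevanlinnaKernel (s : ℝ) (w : ℂ) : ℂ := (1 + s * w) / (s - w)

noncomputable def imWeight (z : ℂ) : ℝ := |z.im| / (1 + ‖z‖ ^ 2)

lemma imWeight_nonneg (z : ℂ) : 0 ≤ imWeight z := by
  unfold imWeight; positivity

lemma imWeight_le_one (z : ℂ) : imWeight z ≤ 1 := by
  refine div_le_one_of_le₀ ?_ (by positivity)
  nlinarith [Complex.abs_im_le_norm z, sq_nonneg (‖z‖ - 1)]

lemma imWeight_mul_norm_le_one (z : ℂ) : imWeight z * ‖z‖ ≤ 1 := by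
  rw [imWeight, div_mul_eq_mul_div]
  refine div_le_one_of_le₀ ?_ (by positivity)
  nlinarith [Complex.abs_im_le_norm z, norm_nonneg z]

lemma imWeight_mul_norm_nevanlinnaKernel_le_one (s : ℝ) (z : ℂ) :
    imWeight z * ‖nevanlinnaKernel s z‖ ≤ 1 := by
  rw [imWeight, nevanlinnaKernel, norm_div, div_mul_div_comm]
  exact div_le_one_of_le₀ (Complex.abs_im_mul_norm_one_add_ofReal_mul_le s z) (by positivity)

lemma imWeight_mul_norm_integral_nevanlinnaKernel_le {μ : Measure ℝ} {g : ℝ → ℂ}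
    (hg : Integrable g μ) (z : ℂ) :
    imWeight z * ‖∫ s, nevanlinnaKernel s z * g s ∂μ‖ ≤ ∫ s, ‖g s‖ ∂μ := by
  have hpointwise (s : ℝ) : imWeight z * ‖nevanlinnaKernel s z * g s‖ ≤ ‖g s‖ := by
    rw [norm_mul, ← mul_assoc]
    exact mul_le_of_le_one_left (norm_nonneg _) (imWeight_mul_norm_nevanlinnaKernel_le_one s z)
  calc imWeight z * ‖∫ s, nevanlinnaKernel s z * g s ∂μ‖
      ≤ imWeight z * ∫ s, ‖nevanlinnaKernel s z * g s‖ ∂μ :=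
        mul_le_mul_of_nonneg_left (norm_integral_le_integral_norm _) (imWeight_nonneg z)
    _ = ∫ s, imWeight z * ‖nevanlinnaKernel s z * g s‖ ∂μ := (integral_const_mul _ _).symm
    _ ≤ ∫ s, ‖g s‖ ∂μ :=
        integral_mono_of_nonneg (ae_of_all _ fun _ => mul_nonneg (imWeight_nonneg z) (norm_nonneg _))
          hg.norm (ae_of_all _ hpointwise)

theorem stmt3_general (φ : ℂ → ℂ)
    (μ : Measure ℝ) (g : ℝ → ℂ) (hg : Integrable g μ) (lam : ℂ)
    (hrep : ∀ w : ℂ, w.im ≠ 0 →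
      φ w = (φ Complex.I + φ (-Complex.I)) / 2 + lam * w
        + ∫ s, ((1 + (s : ℂ) * w) / ((s : ℂ) - w)) * g s ∂μ) :
    ∃ C : ℝ, ∀ z : ℂ, z.im ≠ 0 → (|z.im| / (1 + ‖z‖ ^ 2)) * ‖φ z‖ ≤ C := by
  set c := (φ Complex.I + φ (-Complex.I)) / 2
  refine ⟨‖c‖ + ‖lam‖ + ∫ s, ‖g s‖ ∂μ, fun z hz => ?_⟩
  change imWeight z * ‖φ z‖ ≤ _
  have hφz : φ z = c + lam * z + ∫ s, nevanlinnaKernel s z * g s ∂μ := hrep z hz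
  have hw := imWeight_nonneg z
  calc imWeight z * ‖φ z‖
      ≤ imWeight z * (‖c‖ + ‖lam‖ * ‖z‖ + ‖∫ s, nevanlinnaKernel s z * g s ∂μ‖) := by
        rw [hφz, ← norm_mul lam z]
        gcongr
        exact norm_add₃_le
    _ = imWeight z * ‖c‖ + ‖lam‖ * (imWeight z * ‖z‖)
          + imWeight z * ‖∫ s, nevanlinnaKernel s z * g s ∂μ‖ := by ring
    _ ≤ ‖c‖ + ‖lam‖ + ∫ s, ‖g s‖ ∂μ := by
        gcongr
        · exact mul_le_of_le_one_left (norm_nonneg c) (imWeight_le_one z)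
        · exact mul_le_of_le_one_right (norm_nonneg lam) (imWeight_mul_norm_le_one z)
        · exact imWeight_mul_norm_integral_nevanlinnaKernel_le hg z

/-- **Global simple behavior of functions admitting a representing measure.**
If a holomorphic function `φ` on `ℂ∖ℝ` admits a representing measure (encoded as a finite
positive measure `μ` with integrable complex density `g`, plus the atomic mass `lam` at `∞`),
then `(|Im z|/(1+|z|²))·|φ(z)|` is bounded on `ℂ∖ℝ`. -/
theorem stmt3 (φ : ℂ → ℂ)
    (hφ : DifferentiableOn ℂ φ {z : ℂ | z.im ≠ 0})
    (μ : Measure ℝ) [IsFiniteMeasure μ] (g : ℝ → ℂ) (hg : Integrable g μ) (lam : ℂ)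
    (hrep : ∀ w : ℂ, w.im ≠ 0 →
      φ w = (φ Complex.I + φ (-Complex.I)) / 2 + lam * w
        + ∫ s, ((1 + (s : ℂ) * w) / ((s : ℂ) - w)) * g s ∂μ) :
    ∃ C : ℝ, ∀ z : ℂ, z.im ≠ 0 → (|z.im| / (1 + ‖z‖ ^ 2)) * ‖φ z‖ ≤ C :=
  stmt3_general φ μ g hg lam hrep
end
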